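/- Let G be a finite abelian group of order q, H a subgroup of G, Y a finite set, and W a channel (G, Y, W). Let U₁, U₂ be independent random variables, each uniformly distributed on G, let X₁ = U₁ + U₂ and X₂ = U₂, and let Y₁, Y₂ be outputs of W with inputs X₁, X₂ respectively, conditionally independent given (X₁, X₂); that is, the joint pmf is p(u₁,u₂,y₁,y₂) = (1/q²)·W(y₁|u₁+u₂)·W(y₂|u₂). Let π : G → G/H denote the quotient map onto cosets of H. Then I(π(U₁); (Y₁,Y₂)) + I(π(U₂); (Y₁,Y₂,U₁)) ≥ 2·I(π(U₁+U₂); Y₁). Consequently the conditional mutual informations satisfy I(U₁; Y₁,Y₂ | π(U₁)) + I(U₂; Y₁,Y₂,U₁ | π(U₂)) ≤ 2·I(X₁; Y₁ | π(X₁)); i.e., the process I^n_H(W) is a super-martingale. -/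

import Mathlib

/-!
Write `X₁ = U₁ + U₂`, `X₂ = U₂`. The bijection `(u₁, u₂, y₁, y₂) ↦ ((x₁, y₁), (x₂, y₂))` carries
`p` to the product of two copies of the law of `(X, Y)` with `X` uniform, so for every homomorphism
`f` out of `G` mutual information is additive: `I(fX₁, fX₂; Y₁, Y₂) = 2 I(fX₁; Y₁)`, and
`(fU₂, fU₁)` carries the same information as `(fX₁, fX₂)`. Two chain rules give
`I(fU₁; Y) + I(fU₂; Y, fU₁) = I(fU₂, fU₁; Y) + I(fU₂; fU₁)`. For `f = π`, data processing
(`U₁ ↦ πU₁`) and `I(πU₂; πU₁) ≥ 0` give the first inequality. For `f = id`, `U₁` and `U₂` are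
independent, so `I(U₁; Y) + I(U₂; Y, U₁) = 2 I(X₁; Y₁)` exactly; subtracting the first inequality,
with `I(U; B | πU) = I(U; B) - I(πU; B)`, gives the second.
-/

open Finset

/-- Mutual information `I(A;B)` (base-2) of two finitely-valued random variables `A, B`
defined on a finite probability space with pmf `p`. -/
noncomputable def mutInfo {Ω α β : Type} [Fintype Ω] [Fintype α] [Fintype β]
    [DecidableEq α] [DecidableEq β]
    (p : Ω → ℝ) (A : Ω → α) (B : Ω → β) : ℝ :=
  ∑ a : α, ∑ b : β,
    (∑ ω ∈ Finset.univ.filter (fun ω => A ω = a ∧ B ω = b), p ω) *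
      Real.logb 2
        ((∑ ω ∈ Finset.univ.filter (fun ω => A ω = a ∧ B ω = b), p ω) /
          ((∑ ω ∈ Finset.univ.filter (fun ω => A ω = a), p ω) *
            (∑ ω ∈ Finset.univ.filter (fun ω => B ω = b), p ω)))

/-- Conditional mutual information `I(A;B|C)` (base-2) of finitely-valued random
variables on a finite probability space with pmf `p`. -/
noncomputable def condMutInfo {Ω α β γ : Type} [Fintype Ω] [Fintype α] [Fintype β] [Fintype γ]
    [DecidableEq α] [DecidableEq β] [DecidableEq γ]
    (p : Ω → ℝ) (A : Ω → α) (B : Ω → β) (C : Ω → γ) : ℝ :=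
  ∑ a : α, ∑ b : β, ∑ c : γ,
    (∑ ω ∈ Finset.univ.filter (fun ω => A ω = a ∧ B ω = b ∧ C ω = c), p ω) *
      Real.logb 2
        (((∑ ω ∈ Finset.univ.filter (fun ω => C ω = c), p ω) *
            (∑ ω ∈ Finset.univ.filter (fun ω => A ω = a ∧ B ω = b ∧ C ω = c), p ω)) /
          ((∑ ω ∈ Finset.univ.filter (fun ω => A ω = a ∧ C ω = c), p ω) *
            (∑ ω ∈ Finset.univ.filter (fun ω => B ω = b ∧ C ω = c), p ω)))

open Real

section Law

variable {Ω α β γ κ κ' : Type} [Fintype Ω] [DecidableEq α] [DecidableEq β] [DecidableEq γ]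
  [DecidableEq κ] [DecidableEq κ'] {p : Ω → ℝ}

noncomputable def law (p : Ω → ℝ) (Z : Ω → κ) (z : κ) : ℝ :=
  ∑ ω ∈ univ.filter (fun ω => Z ω = z), p ω

theorem law_congr {Z : Ω → κ} {Z' : Ω → κ'} {z : κ} {z' : κ'} (h : ∀ ω, Z ω = z ↔ Z' ω = z') :
    law p Z z = law p Z' z' := by
  unfold law
  congr 1
  exact filter_congr fun ω _ => h ω

theorem law_pair_comm (A : Ω → α) (B : Ω → β) (a : α) (b : β) :
    law p (fun ω => (A ω, B ω)) (a, b) = law p (fun ω => (B ω, A ω)) (b, a) :=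
  law_congr fun ω => by simp only [Prod.mk.injEq, and_comm]

theorem law_triple_comm (A : Ω → α) (B : Ω → β) (C : Ω → γ) (a : α) (b : β) (c : γ) :
    law p (fun ω => (A ω, B ω, C ω)) (a, b, c) = law p (fun ω => (B ω, A ω, C ω)) (b, a, c) :=
  law_congr fun ω => by simp only [Prod.mk.injEq, and_left_comm]

theorem law_nonneg (hp : ∀ ω, 0 ≤ p ω) (Z : Ω → κ) (z : κ) : 0 ≤ law p Z z :=
  sum_nonneg fun ω _ => hp ω

theorem law_le_law (hp : ∀ ω, 0 ≤ p ω) {Z : Ω → κ} {Z' : Ω → κ'} {z : κ} {z' : κ'}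
    (h : ∀ ω, Z ω = z → Z' ω = z') : law p Z z ≤ law p Z' z' :=
  sum_le_sum_of_subset_of_nonneg (monotone_filter_right _ fun ω _ => h ω) fun ω _ _ => hp ω

theorem law_apply_pos (hp : ∀ ω, 0 ≤ p ω) {ω : Ω} (hω : 0 < p ω) (Z : Ω → κ) :
    0 < law p Z (Z ω) :=
  hω.trans_le <| single_le_sum (fun ω _ => hp ω) (by simp)

theorem sum_law [Fintype κ] (Z : Ω → κ) : ∑ z, law p Z z = ∑ ω, p ω :=
  sum_fiberwise univ Z p

theorem sum_law_mul [Fintype κ] (Z : Ω → κ) (F : κ → ℝ) :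
    ∑ z, law p Z z * F z = ∑ ω, p ω * F (Z ω) := by
  simp only [law, sum_mul]
  rw [← sum_fiberwise univ Z fun ω => p ω * F (Z ω)]
  exact sum_congr rfl fun z _ => sum_congr rfl fun ω hω => by rw [(mem_filter.1 hω).2]

theorem sum_law_pair_right [Fintype β] (A : Ω → α) (B : Ω → β) (a : α) :
    ∑ b, law p (fun ω => (A ω, B ω)) (a, b) = law p A a := by
  unfold law
  rw [← sum_fiberwise (univ.filter fun ω => A ω = a) B p]
  refine sum_congr rfl fun b _ => ?_
  rw [filter_filter]
  exact sum_congr (filter_congr fun ω _ => Prod.ext_iff) fun _ _ => rfl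

theorem sum_law_pair_left [Fintype α] (A : Ω → α) (B : Ω → β) (b : β) :
    ∑ a, law p (fun ω => (A ω, B ω)) (a, b) = law p B b := by
  simp only [law_pair_comm A B]
  exact sum_law_pair_right B A b

theorem law_comp [Fintype κ] (Z : Ω → κ) (V : κ → κ') (v : κ') :
    law p (fun ω => V (Z ω)) v = law (law p Z) V v := by
  unfold law
  rw [← sum_fiberwise_of_maps_to (t := univ.filter fun z => V z = v) (g := Z)
    (by intro ω hω; simpa using hω)]
  refine sum_congr rfl fun z hz => ?_
  rw [filter_filter]
  refine sum_congr (filter_congr fun ω _ => ?_) fun _ _ => rfl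
  exact ⟨fun h => h.2, by rintro rfl; exact ⟨(mem_filter.1 hz).2, rfl⟩⟩

theorem law_equiv [Fintype κ] (e : Ω ≃ κ) (z : κ) : law p e z = p (e.symm z) := by
  refine sum_eq_single_of_mem _ (by simp) fun ω hω hne => ?_
  exact absurd (e.eq_symm_apply.2 (mem_filter.1 hω).2) hne

end Law

section ProductLaw

variable {Ω₁ Ω₂ κ₁ κ₂ : Type} [Fintype Ω₁] [Fintype Ω₂] [DecidableEq κ₁] [DecidableEq κ₂]

theorem law_prod (P : Ω₁ → ℝ) (Q : Ω₂ → ℝ) (V₁ : Ω₁ → κ₁) (V₂ : Ω₂ → κ₂) (v₁ : κ₁) (v₂ : κ₂) :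
    law (fun z : Ω₁ × Ω₂ => P z.1 * Q z.2) (fun z => (V₁ z.1, V₂ z.2)) (v₁, v₂) =
      law P V₁ v₁ * law Q V₂ v₂ := by
  simp only [law, sum_mul_sum, ← sum_product', Prod.mk.injEq, ← univ_product_univ]
  rw [← filter_product]

theorem law_prod_fst [DecidableEq Ω₁] (P : Ω₁ → ℝ) (Q : Ω₂ → ℝ) (x : Ω₁) :
    law (fun z : Ω₁ × Ω₂ => P z.1 * Q z.2) Prod.fst x = P x * ∑ ω, Q ω := by
  rw [law, ← univ_product_univ, filter_product_left (· = x), sum_product, filter_eq',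
    if_pos (mem_univ x), sum_singleton, mul_sum]

end ProductLaw

-- `hts` excludes `s = 0 < t`, where the junk value `t / 0 = 0` would break the bound.
theorem sub_div_log_two_le_mul_logb {t s : ℝ} (ht : 0 ≤ t) (hs : 0 ≤ s) (hts : 0 < t → 0 < s) :
    (t - s) / log 2 ≤ t * logb 2 (t / s) := by
  rcases ht.eq_or_lt with rfl | ht
  · simpa using div_nonpos_of_nonpos_of_nonneg (neg_nonpos.2 hs) (log_nonneg one_le_two)
  have key : t - s ≤ t * log (t / s) := by
    have := mul_le_mul_of_nonneg_left (one_sub_inv_le_log_of_pos (div_pos ht (hts ht))) ht.le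
    rwa [inv_div, mul_sub, mul_one, mul_div_cancel₀ _ ht.ne'] at this
  rw [logb, ← mul_div_assoc]
  exact div_le_div_of_nonneg_right key (log_nonneg one_le_two)

section Pointwise

variable {Ω α β γ : Type} [Fintype Ω] [DecidableEq α] [DecidableEq β] [DecidableEq γ]
  {p : Ω → ℝ}

/- `mutInfo` and `condMutInfo` are the `p`-averages of these pointwise densities, so identities
between them are proved pointwise, at the points where `p ω > 0`. -/
noncomputable def pmi (p : Ω → ℝ) (A : Ω → α) (B : Ω → β) (ω : Ω) : ℝ :=
  logb 2 (law p (fun ω => (A ω, B ω)) (A ω, B ω) / (law p A (A ω) * law p B (B ω)))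

noncomputable def condPmi (p : Ω → ℝ) (A : Ω → α) (B : Ω → β) (C : Ω → γ) (ω : Ω) : ℝ :=
  logb 2 (law p C (C ω) * law p (fun ω => (A ω, B ω, C ω)) (A ω, B ω, C ω) /
    (law p (fun ω => (A ω, C ω)) (A ω, C ω) * law p (fun ω => (B ω, C ω)) (B ω, C ω)))

theorem pmi_pair_eq_add (hp : ∀ ω, 0 ≤ p ω) {ω : Ω} (hω : 0 < p ω) (A : Ω → α) (B : Ω → β)
    (C : Ω → γ) : pmi p A (fun ω => (C ω, B ω)) ω = pmi p A B ω + condPmi p A C B ω := by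
  have hA := law_apply_pos hp hω A
  have hB := law_apply_pos hp hω B
  have hAB := law_apply_pos hp hω fun ω => (A ω, B ω)
  have hCB := law_apply_pos hp hω fun ω => (C ω, B ω)
  have hACB := law_apply_pos hp hω fun ω => (A ω, C ω, B ω)
  simp only [pmi, condPmi] at *
  rw [← logb_mul (by positivity) (by positivity)]
  congr 1
  field_simp

theorem sum_mul_eq_sum_mul_of_pos (hp : ∀ ω, 0 ≤ p ω) {f g : Ω → ℝ}
    (h : ∀ ω, 0 < p ω → f ω = g ω) : ∑ ω, p ω * f ω = ∑ ω, p ω * g ω := by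
  refine sum_congr rfl fun ω _ => ?_
  rcases (hp ω).eq_or_lt with h0 | hpos
  · rw [← h0, zero_mul, zero_mul]
  · rw [h ω hpos]

end Pointwise

section MutualInformation

variable {Ω α β γ : Type} [Fintype Ω] [DecidableEq α] [DecidableEq β] [DecidableEq γ]
  {p : Ω → ℝ}

theorem mutInfo_eq_sum_law [Fintype α] [Fintype β] (p : Ω → ℝ) (A : Ω → α) (B : Ω → β) :
    mutInfo p A B = ∑ a, ∑ b, law p (fun ω => (A ω, B ω)) (a, b) *
      logb 2 (law p (fun ω => (A ω, B ω)) (a, b) / (law p A a * law p B b)) := by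
  simp only [law, Prod.mk.injEq]
  rfl

theorem condMutInfo_eq_sum_law [Fintype α] [Fintype β] [Fintype γ] (p : Ω → ℝ) (A : Ω → α)
    (B : Ω → β) (C : Ω → γ) :
    condMutInfo p A B C = ∑ a, ∑ b, ∑ c, law p (fun ω => (A ω, B ω, C ω)) (a, b, c) *
      logb 2 (law p C c * law p (fun ω => (A ω, B ω, C ω)) (a, b, c) /
        (law p (fun ω => (A ω, C ω)) (a, c) * law p (fun ω => (B ω, C ω)) (b, c))) := by
  simp only [law, Prod.mk.injEq]
  rfl

theorem mutInfo_eq_sum_pmi [Fintype α] [Fintype β] (p : Ω → ℝ) (A : Ω → α) (B : Ω → β) :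
    mutInfo p A B = ∑ ω, p ω * pmi p A B ω := by
  rw [mutInfo_eq_sum_law]
  simp only [← Fintype.sum_prod_type']
  exact sum_law_mul (fun ω => (A ω, B ω)) fun ab =>
    logb 2 (law p (fun ω => (A ω, B ω)) ab / (law p A ab.1 * law p B ab.2))

theorem condMutInfo_eq_sum_condPmi [Fintype α] [Fintype β] [Fintype γ] (p : Ω → ℝ)
    (A : Ω → α) (B : Ω → β) (C : Ω → γ) :
    condMutInfo p A B C = ∑ ω, p ω * condPmi p A B C ω := by
  rw [condMutInfo_eq_sum_law]
  simp only [← Fintype.sum_prod_type']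
  exact sum_law_mul (fun ω => (A ω, B ω, C ω)) fun abc =>
    logb 2 (law p C abc.2.2 * law p (fun ω => (A ω, B ω, C ω)) abc /
      (law p (fun ω => (A ω, C ω)) (abc.1, abc.2.2) * law p (fun ω => (B ω, C ω)) abc.2))

variable [Fintype α] [Fintype β] [Fintype γ]

theorem mutInfo_comm (p : Ω → ℝ) (A : Ω → α) (B : Ω → β) : mutInfo p A B = mutInfo p B A := by
  simp only [mutInfo_eq_sum_pmi, pmi, law_pair_comm A B, mul_comm (law p A _)]

theorem condMutInfo_comm (p : Ω → ℝ) (A : Ω → α) (B : Ω → β) (C : Ω → γ) :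
    condMutInfo p A B C = condMutInfo p B A C := by
  simp only [condMutInfo_eq_sum_condPmi, condPmi, law_triple_comm A B C,
    mul_comm (law p (fun ω => (A ω, C ω)) _)]

theorem mutInfo_congr_right {β' : Type} [Fintype β'] [DecidableEq β'] (p : Ω → ℝ) (A : Ω → α)
    {B : Ω → β} {B' : Ω → β'} (h : ∀ ω ω', B ω' = B ω ↔ B' ω' = B' ω) :
    mutInfo p A B = mutInfo p A B' := by
  simp only [mutInfo_eq_sum_pmi, pmi]
  refine sum_congr rfl fun ω _ => ?_
  rw [law_congr (h ω), law_congr (Z' := fun ω => (A ω, B' ω)) (z' := (A ω, B' ω)) fun ω' => by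
    simp only [Prod.mk.injEq, h ω ω']]

theorem mutInfo_pair_eq_add (hp : ∀ ω, 0 ≤ p ω) (A : Ω → α) (B : Ω → β) (C : Ω → γ) :
    mutInfo p A (fun ω => (C ω, B ω)) = mutInfo p A B + condMutInfo p A C B := by
  simp only [mutInfo_eq_sum_pmi, condMutInfo_eq_sum_condPmi, ← sum_add_distrib, ← mul_add]
  exact sum_mul_eq_sum_mul_of_pos hp fun ω hω => pmi_pair_eq_add hp hω A B C

theorem condMutInfo_nonneg (hp : ∀ ω, 0 ≤ p ω) (A : Ω → α) (B : Ω → β) (C : Ω → γ) :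
    0 ≤ condMutInfo p A B C := by
  have gibbs : ∀ a b c, (law p (fun ω => (A ω, B ω, C ω)) (a, b, c) -
      law p (fun ω => (A ω, C ω)) (a, c) * law p (fun ω => (B ω, C ω)) (b, c) / law p C c) /
        log 2 ≤ law p (fun ω => (A ω, B ω, C ω)) (a, b, c) *
      logb 2 (law p C c * law p (fun ω => (A ω, B ω, C ω)) (a, b, c) /
        (law p (fun ω => (A ω, C ω)) (a, c) * law p (fun ω => (B ω, C ω)) (b, c))) := by
    intro a b c
    conv_rhs => rw [mul_comm (law p C c), ← div_div_eq_mul_div]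
    apply sub_div_log_two_le_mul_logb (law_nonneg hp _ _)
    · exact div_nonneg (mul_nonneg (law_nonneg hp _ _) (law_nonneg hp _ _)) (law_nonneg hp _ _)
    · intro ht
      refine div_pos (mul_pos (ht.trans_le (law_le_law hp ?_)) (ht.trans_le (law_le_law hp ?_)))
        (ht.trans_le (law_le_law hp ?_)) <;> simp +contextual [Prod.ext_iff]
  have hmarg : ∀ c, ∑ a, ∑ b, (law p (fun ω => (A ω, B ω, C ω)) (a, b, c) -
      law p (fun ω => (A ω, C ω)) (a, c) * law p (fun ω => (B ω, C ω)) (b, c) / law p C c) = 0 := by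
    intro c
    simp only [sum_sub_distrib, ← sum_div, ← mul_sum, ← sum_mul]
    rw [sum_comm, sum_congr rfl fun b _ => sum_law_pair_left A (fun ω => (B ω, C ω)) (b, c),
      sum_law_pair_left, sum_law_pair_left, mul_self_div_self, sub_self]
  rw [condMutInfo_eq_sum_law]
  refine le_trans (le_of_eq ?_) (sum_le_sum fun a _ => sum_le_sum fun b _ =>
    sum_le_sum fun c _ => gibbs a b c)
  simp only [← sum_div]
  rw [sum_congr rfl fun a _ => sum_comm, sum_comm]
  simp only [hmarg, sum_const_zero, zero_div]

theorem mutInfo_nonneg (hp : ∀ ω, 0 ≤ p ω) (hp1 : ∑ ω, p ω = 1) (A : Ω → α) (B : Ω → β) :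
    0 ≤ mutInfo p A B := by
  have gibbs : ∀ a b, (law p (fun ω => (A ω, B ω)) (a, b) - law p A a * law p B b) / log 2 ≤
      law p (fun ω => (A ω, B ω)) (a, b) *
        logb 2 (law p (fun ω => (A ω, B ω)) (a, b) / (law p A a * law p B b)) := by
    intro a b
    apply sub_div_log_two_le_mul_logb (law_nonneg hp _ _)
    · exact mul_nonneg (law_nonneg hp _ _) (law_nonneg hp _ _)
    · intro ht
      refine mul_pos (ht.trans_le (law_le_law hp ?_)) (ht.trans_le (law_le_law hp ?_)) <;>
        simp +contextual [Prod.ext_iff]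
  rw [mutInfo_eq_sum_law]
  refine le_trans (le_of_eq ?_) (sum_le_sum fun a _ => sum_le_sum fun b _ => gibbs a b)
  simp only [← sum_div, sum_sub_distrib, ← mul_sum, ← sum_mul, sum_law_pair_right, sum_law, hp1]
  norm_num

theorem mutInfo_pair_comp_right (p : Ω → ℝ) (A : Ω → α) (B : Ω → β) (g : β → γ) :
    mutInfo p A (fun ω => (B ω, g (B ω))) = mutInfo p A B :=
  mutInfo_congr_right p A fun ω ω' => ⟨fun h => (Prod.ext_iff.1 h).1, fun h => by rw [h]⟩

theorem mutInfo_comp_right_le (hp : ∀ ω, 0 ≤ p ω) (A : Ω → α) (B : Ω → β) (g : β → γ) :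
    mutInfo p A (fun ω => g (B ω)) ≤ mutInfo p A B := by
  rw [← mutInfo_pair_comp_right p A B g, mutInfo_pair_eq_add hp]
  exact le_add_of_nonneg_right (condMutInfo_nonneg hp _ _ _)

theorem condMutInfo_comp_self (hp : ∀ ω, 0 ≤ p ω) (U : Ω → α) (B : Ω → β) (f : α → γ) :
    condMutInfo p U B (fun ω => f (U ω)) = mutInfo p U B - mutInfo p (fun ω => f (U ω)) B := by
  have chain := mutInfo_pair_eq_add hp B (fun ω => f (U ω)) U
  rw [mutInfo_pair_comp_right] at chain
  rw [condMutInfo_comm, mutInfo_comm p U, mutInfo_comm p (fun ω => f (U ω))]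
  linarith

theorem mutInfo_add_mutInfo_pair (hp : ∀ ω, 0 ≤ p ω) (A : Ω → α) (B : Ω → β) (Y : Ω → γ) :
    mutInfo p A Y + mutInfo p B (fun ω => (Y ω, A ω)) =
      mutInfo p (fun ω => (B ω, A ω)) Y + mutInfo p B A := by
  rw [mutInfo_pair_eq_add hp, mutInfo_comm p (fun ω => (B ω, A ω)), mutInfo_pair_eq_add hp,
    condMutInfo_comm, mutInfo_comm p Y]
  ring

theorem mutInfo_eq_zero_of_law_eq_mul (A : Ω → α) (B : Ω → β)
    (h : ∀ a b, law p (fun ω => (A ω, B ω)) (a, b) = law p A a * law p B b) :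
    mutInfo p A B = 0 := by
  rw [mutInfo_eq_sum_law]
  refine sum_eq_zero fun a _ => sum_eq_zero fun b _ => ?_
  rw [h]
  rcases eq_or_ne (law p A a * law p B b) 0 with h0 | h0 <;> simp [h0]

theorem mutInfo_comp_eq_law {κ : Type} [Fintype κ] [DecidableEq κ] (Z : Ω → κ) (A : κ → α)
    (B : κ → β) : mutInfo p (fun ω => A (Z ω)) (fun ω => B (Z ω)) = mutInfo (law p Z) A B := by
  simp only [mutInfo_eq_sum_pmi, pmi]
  rw [sum_law_mul Z]
  simp only [law_comp Z (fun z => (A z, B z)), law_comp Z A, law_comp Z B]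

end MutualInformation

section ProductSpace

variable {Ω₁ Ω₂ α₁ β₁ α₂ β₂ : Type} [Fintype Ω₁] [Fintype Ω₂] [DecidableEq α₁] [DecidableEq β₁]
  [DecidableEq α₂] [DecidableEq β₂]
  {P : Ω₁ → ℝ} {Q : Ω₂ → ℝ}

theorem pmi_prod (hP : ∀ ω, 0 ≤ P ω) (hQ : ∀ ω, 0 ≤ Q ω) {z : Ω₁ × Ω₂} (hz : 0 < P z.1 * Q z.2)
    (A₁ : Ω₁ → α₁) (B₁ : Ω₁ → β₁) (A₂ : Ω₂ → α₂) (B₂ : Ω₂ → β₂) :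
    pmi (fun z : Ω₁ × Ω₂ => P z.1 * Q z.2) (fun z => (A₁ z.1, A₂ z.2)) (fun z => (B₁ z.1, B₂ z.2))
      z = pmi P A₁ B₁ z.1 + pmi Q A₂ B₂ z.2 := by
  have hPz : 0 < P z.1 := lt_of_le_of_ne (hP _) fun h => by simp [← h] at hz
  have hQz : 0 < Q z.2 := lt_of_le_of_ne (hQ _) fun h => by simp [← h] at hz
  have := law_apply_pos hP hPz A₁
  have := law_apply_pos hP hPz B₁
  have := law_apply_pos hP hPz fun ω => (A₁ ω, B₁ ω)
  have := law_apply_pos hQ hQz A₂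
  have := law_apply_pos hQ hQz B₂
  have := law_apply_pos hQ hQz fun ω => (A₂ ω, B₂ ω)
  simp only [pmi] at *
  rw [law_congr (Z' := fun z => ((A₁ z.1, B₁ z.1), (A₂ z.2, B₂ z.2)))
    (z' := ((A₁ z.1, B₁ z.1), (A₂ z.2, B₂ z.2))) fun _ => by simp only [Prod.mk.injEq]; tauto,
    law_prod P Q (fun ω => (A₁ ω, B₁ ω)) (fun ω => (A₂ ω, B₂ ω)), law_prod P Q A₁ A₂,
    law_prod P Q B₁ B₂, ← logb_mul (by positivity) (by positivity)]
  congr 1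
  field_simp

theorem mutInfo_prod [Fintype α₁] [Fintype β₁] [Fintype α₂] [Fintype β₂] (hP : ∀ ω, 0 ≤ P ω)
    (hQ : ∀ ω, 0 ≤ Q ω) (hP1 : ∑ ω, P ω = 1) (hQ1 : ∑ ω, Q ω = 1) (A₁ : Ω₁ → α₁) (B₁ : Ω₁ → β₁)
    (A₂ : Ω₂ → α₂) (B₂ : Ω₂ → β₂) :
    mutInfo (fun z : Ω₁ × Ω₂ => P z.1 * Q z.2) (fun z => (A₁ z.1, A₂ z.2))
      (fun z => (B₁ z.1, B₂ z.2)) = mutInfo P A₁ B₁ + mutInfo Q A₂ B₂ := by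
  rw [mutInfo_eq_sum_pmi]
  refine (sum_mul_eq_sum_mul_of_pos (fun z : Ω₁ × Ω₂ => mul_nonneg (hP z.1) (hQ z.2))
    fun z hz => pmi_prod hP hQ hz A₁ B₁ A₂ B₂).trans ?_
  rw [mutInfo_eq_sum_pmi, mutInfo_eq_sum_pmi, Fintype.sum_prod_type]
  simp only [mul_add, sum_add_distrib]
  congr 1
  · simp only [← sum_mul, ← mul_sum, hQ1, mul_one]
  · rw [sum_comm]
    simp only [mul_assoc, ← sum_mul, hP1, one_mul]

end ProductSpace

section UniformInput

variable {G Y : Type} [Fintype G] {W : G → Y → ℝ}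

noncomputable def uniformInput (W : G → Y → ℝ) (xy : G × Y) : ℝ :=
  W xy.1 xy.2 / Fintype.card G

theorem uniformInput_nonneg (hW0 : ∀ x y, 0 ≤ W x y) (xy : G × Y) : 0 ≤ uniformInput W xy :=
  div_nonneg (hW0 _ _) (Nat.cast_nonneg _)

theorem sum_uniformInput [Nonempty G] [Fintype Y] (hW1 : ∀ x, ∑ y, W x y = 1) :
    ∑ xy, uniformInput W xy = 1 := by
  simp [uniformInput, Fintype.sum_prod_type, ← sum_div, hW1]

end UniformInput

section PolarTransform

variable {G Y : Type} [Fintype G] [AddCommGroup G] [DecidableEq G] [Fintype Y] [DecidableEq Y]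

@[simps]
def polarEquiv : G × G × Y × Y ≃ (G × Y) × (G × Y) where
  toFun ω := ((ω.1 + ω.2.1, ω.2.2.1), (ω.2.1, ω.2.2.2))
  invFun z := (z.1.1 - z.2.1, z.2.1, z.1.2, z.2.2)
  left_inv ω := by simp
  right_inv z := by simp

variable {W : G → Y → ℝ} {p : G × G × Y × Y → ℝ}

theorem law_polarEquiv (hp : ∀ u₁ u₂ : G, ∀ y₁ y₂ : Y,
      p (u₁, u₂, y₁, y₂) = (1 / ((Fintype.card G : ℝ)) ^ 2) * W (u₁ + u₂) y₁ * W u₂ y₂) :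
    law p polarEquiv = fun z => uniformInput W z.1 * uniformInput W z.2 := by
  funext z
  rw [law_equiv, polarEquiv_symm_apply, hp, sub_add_cancel, uniformInput, uniformInput]
  ring

theorem law_polarEquiv_fst (hW1 : ∀ x, ∑ y, W x y = 1)
    (hlaw : law p polarEquiv = fun z => uniformInput W z.1 * uniformInput W z.2) :
    law p (fun ω => (ω.1 + ω.2.1, ω.2.2.1)) = uniformInput W := by
  funext xy
  have h := law_comp (p := p) polarEquiv Prod.fst xy
  simp only [polarEquiv_apply] at h
  rw [h, hlaw, law_prod_fst, sum_uniformInput hW1, mul_one]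

theorem mutInfo_map_inputs_eq_two_mul {K : Type} [AddCommGroup K] [Fintype K] [DecidableEq K]
    (hW0 : ∀ x y, 0 ≤ W x y) (hW1 : ∀ x, ∑ y, W x y = 1)
    (hlaw : law p polarEquiv = fun z => uniformInput W z.1 * uniformInput W z.2) (f : G →+ K) :
    mutInfo p (fun ω => (f ω.2.1, f ω.1)) (fun ω => (ω.2.2.1, ω.2.2.2)) =
      2 * mutInfo p (fun ω => f (ω.1 + ω.2.1)) (fun ω => ω.2.2.1) := by
  have hpair := mutInfo_comp_eq_law (p := p) polarEquiv (fun z => (f z.1.1, f z.2.1))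
    (fun z => (z.1.2, z.2.2))
  have hsingle := mutInfo_comp_eq_law (p := p) (fun ω => (ω.1 + ω.2.1, ω.2.2.1))
    (fun xy => f xy.1) Prod.snd
  simp only [polarEquiv_apply] at hpair hsingle
  rw [mutInfo_comm, mutInfo_congr_right _ _ (B' := fun ω => (f (ω.1 + ω.2.1), f ω.2.1)) ?_,
    mutInfo_comm, hpair, hsingle, hlaw, law_polarEquiv_fst hW1 hlaw,
    mutInfo_prod (uniformInput_nonneg hW0) (uniformInput_nonneg hW0) (sum_uniformInput hW1)
      (sum_uniformInput hW1) (fun xy => f xy.1) Prod.snd (fun xy => f xy.1) Prod.snd, two_mul]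
  intro ω ω'
  simp only [Prod.mk.injEq, map_add]
  constructor
  · rintro ⟨h₂, h₁⟩; exact ⟨by rw [h₁, h₂], h₂⟩
  · rintro ⟨h, h₂⟩; exact ⟨h₂, by rw [h₂] at h; exact add_right_cancel h⟩

theorem nonneg_of_law_polarEquiv (hW0 : ∀ x y, 0 ≤ W x y)
    (hlaw : law p polarEquiv = fun z => uniformInput W z.1 * uniformInput W z.2)
    (ω : G × G × Y × Y) : 0 ≤ p ω := by
  have h := congrFun hlaw (polarEquiv ω)
  rw [law_equiv, Equiv.symm_apply_apply] at h
  rw [h]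
  exact mul_nonneg (uniformInput_nonneg hW0 _) (uniformInput_nonneg hW0 _)

theorem sum_eq_one_of_law_polarEquiv (hW1 : ∀ x, ∑ y, W x y = 1)
    (hlaw : law p polarEquiv = fun z => uniformInput W z.1 * uniformInput W z.2) :
    ∑ ω, p ω = 1 := by
  rw [← sum_law polarEquiv, hlaw]
  dsimp only
  rw [Fintype.sum_prod_type' fun a b => uniformInput W a * uniformInput W b, ← sum_mul_sum,
    sum_uniformInput hW1, one_mul]

theorem mutInfo_add_mutInfo_map_inputs {K : Type} [AddCommGroup K] [Fintype K] [DecidableEq K]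
    (hW0 : ∀ x y, 0 ≤ W x y) (hW1 : ∀ x, ∑ y, W x y = 1)
    (hlaw : law p polarEquiv = fun z => uniformInput W z.1 * uniformInput W z.2) (f : G →+ K) :
    mutInfo p (fun ω => f ω.1) (fun ω => (ω.2.2.1, ω.2.2.2)) +
        mutInfo p (fun ω => f ω.2.1) (fun ω => ((ω.2.2.1, ω.2.2.2), f ω.1)) =
      2 * mutInfo p (fun ω => f (ω.1 + ω.2.1)) (fun ω => ω.2.2.1) +
        mutInfo p (fun ω => f ω.2.1) (fun ω => f ω.1) := by
  rw [mutInfo_add_mutInfo_pair (nonneg_of_law_polarEquiv hW0 hlaw),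
    mutInfo_map_inputs_eq_two_mul hW0 hW1 hlaw]

end PolarTransform

theorem mutInfo_inputs_eq_zero {G Y : Type} [Fintype G] [AddCommGroup G] [DecidableEq G]
    [Fintype Y] {W : G → Y → ℝ} {p : G × G × Y × Y → ℝ} (hW1 : ∀ x, ∑ y, W x y = 1)
    (hp : ∀ u₁ u₂ : G, ∀ y₁ y₂ : Y,
      p (u₁, u₂, y₁, y₂) = (1 / ((Fintype.card G : ℝ)) ^ 2) * W (u₁ + u₂) y₁ * W u₂ y₂) :
    mutInfo p (fun ω => ω.2.1) (fun ω => ω.1) = 0 := by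
  have huniform : ∀ a b,
      law p (fun ω => (ω.2.1, ω.1)) (a, b) = (1 / (Fintype.card G : ℝ)) ^ 2 := by
    intro a b
    simp only [law, sum_filter, Fintype.sum_prod_type, Prod.mk.injEq, ite_and]
    simp [hp, ← mul_sum, hW1]
  refine mutInfo_eq_zero_of_law_eq_mul _ _ fun a b => ?_
  rw [← sum_law_pair_right (fun ω : G × G × Y × Y => ω.2.1) (fun ω => ω.1) a,
    ← sum_law_pair_left (fun ω : G × G × Y × Y => ω.2.1) (fun ω => ω.1) b]
  simp only [huniform, sum_const, card_univ, nsmul_eq_mul]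
  field_simp

theorem IH_supermartingale
    {G Y : Type} [Fintype G] [AddCommGroup G] [DecidableEq G] [Fintype Y] [DecidableEq Y]
    (W : G → Y → ℝ) (hW0 : ∀ x y, 0 ≤ W x y) (hW1 : ∀ x, ∑ y, W x y = 1)
    (H : AddSubgroup G) [DecidableEq (G ⧸ H)] [Fintype (G ⧸ H)]
    (p : G × G × Y × Y → ℝ)
    (hp : ∀ u₁ u₂ : G, ∀ y₁ y₂ : Y,
      p (u₁, u₂, y₁, y₂) =
        (1 / ((Fintype.card G : ℝ)) ^ 2) * W (u₁ + u₂) y₁ * W u₂ y₂) :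
    (mutInfo p (fun ω => (QuotientAddGroup.mk ω.1 : G ⧸ H)) (fun ω => (ω.2.2.1, ω.2.2.2)) +
        mutInfo p (fun ω => (QuotientAddGroup.mk ω.2.1 : G ⧸ H))
          (fun ω => (ω.2.2.1, ω.2.2.2, ω.1)) ≥
      2 * mutInfo p (fun ω => (QuotientAddGroup.mk (ω.1 + ω.2.1) : G ⧸ H))
          (fun ω => ω.2.2.1)) ∧
    (condMutInfo p (fun ω => ω.1) (fun ω => (ω.2.2.1, ω.2.2.2))
          (fun ω => (QuotientAddGroup.mk ω.1 : G ⧸ H)) +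
        condMutInfo p (fun ω => ω.2.1) (fun ω => (ω.2.2.1, ω.2.2.2, ω.1))
          (fun ω => (QuotientAddGroup.mk ω.2.1 : G ⧸ H)) ≤
      2 * condMutInfo p (fun ω => ω.1 + ω.2.1) (fun ω => ω.2.2.1)
          (fun ω => (QuotientAddGroup.mk (ω.1 + ω.2.1) : G ⧸ H))) := by
  have hlaw := law_polarEquiv hp
  have hp0 := nonneg_of_law_polarEquiv hW0 hlaw
  have hcoset := mutInfo_add_mutInfo_map_inputs hW0 hW1 hlaw (QuotientAddGroup.mk' H)
  have hid := mutInfo_add_mutInfo_map_inputs hW0 hW1 hlaw (AddMonoidHom.id G)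
  simp only [QuotientAddGroup.mk'_apply, AddMonoidHom.id_apply] at hcoset hid
  have hcoarse := mutInfo_comp_right_le hp0 (fun ω => (ω.2.1 : G ⧸ H))
    (fun ω => (ω.2.2.1, ω.2.2.2, ω.1)) fun t => ((t.1, t.2.1), (t.2.2 : G ⧸ H))
  have hcosets_nonneg := mutInfo_nonneg hp0 (sum_eq_one_of_law_polarEquiv hW1 hlaw)
    (fun ω => (ω.2.1 : G ⧸ H)) (fun ω => (ω.1 : G ⧸ H))
  have hregroup := mutInfo_congr_right p (fun ω => ω.2.1)
    (B := fun ω => (ω.2.2.1, ω.2.2.2, ω.1)) (B' := fun ω => ((ω.2.2.1, ω.2.2.2), ω.1))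
    fun ω ω' => by simp only [Prod.mk.injEq, and_assoc]
  constructor
  · linarith
  · rw [condMutInfo_comp_self hp0 (fun ω => ω.1) _ QuotientAddGroup.mk,
      condMutInfo_comp_self hp0 (fun ω => ω.2.1) _ QuotientAddGroup.mk,
      condMutInfo_comp_self hp0 (fun ω => ω.1 + ω.2.1) _ QuotientAddGroup.mk]
    rw [mutInfo_inputs_eq_zero hW1 hp] at hid
    linarith
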